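/- arXiv:1905.05424 — 6 statements merged into one kernel-verified Lean document; each statement's English description precedes it below -/
import Mathlib

section
/- For all real numbers $n_2 \geq n_3 \geq 1$, one has $(n_2+n_3)^{3/2} - n_2^{3/2} - n_3^{3/2} \geq \frac{1}{5}\sqrt{n_2}$. -/
theorem stmt_0 (n2 n3 : ℝ) (h3 : 1 ≤ n3) (h23 : n3 ≤ n2) :
    (n2 + n3) ^ ((3:ℝ)/2) - n2 ^ ((3:ℝ)/2) - n3 ^ ((3:ℝ)/2) ≥ Real.sqrt n2 / 5 := by
  have hn3 : (0:ℝ) ≤ n3 := by linarith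
  have hn2 : (0:ℝ) ≤ n2 := by linarith
  have hs : (0:ℝ) ≤ n2 + n3 := by linarith
  set a := Real.sqrt n2 with ha
  set b := Real.sqrt n3 with hb
  set s := Real.sqrt (n2 + n3) with hsdef
  have ha2 : a ^ 2 = n2 := Real.sq_sqrt hn2
  have hb2 : b ^ 2 = n3 := Real.sq_sqrt hn3
  have hs2 : s ^ 2 = n2 + n3 := Real.sq_sqrt hs
  have hrw : ∀ x : ℝ, 0 ≤ x → x ^ ((3:ℝ)/2) = Real.sqrt x ^ 3 := by
    intro x hx
    rw [show (3:ℝ)/2 = (1/2) * 3 by norm_num, Real.rpow_mul hx,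
      show (3:ℝ) = ((3:ℕ):ℝ) by norm_num, Real.rpow_natCast,
      show x ^ ((1:ℝ)/2) = Real.sqrt x by rw [Real.sqrt_eq_rpow]]
  rw [hrw _ hs, hrw _ hn2, hrw _ hn3]
  have hapos : 1 ≤ a := by
    rw [ha, show (1:ℝ) = Real.sqrt 1 by simp]
    exact Real.sqrt_le_sqrt (by linarith)
  have hbpos : 1 ≤ b := by
    rw [hb, show (1:ℝ) = Real.sqrt 1 by simp]
    exact Real.sqrt_le_sqrt h3
  have hba : b ≤ a := Real.sqrt_le_sqrt h23
  have hsa : a ≤ s := Real.sqrt_le_sqrt (by linarith)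
  nlinarith [sq_nonneg (s - a), sq_nonneg (s + a), mul_pos (lt_of_lt_of_le one_pos hbpos) (lt_of_lt_of_le one_pos hapos), sq_nonneg b, mul_nonneg (mul_nonneg (sub_nonneg.2 hsa) (sub_nonneg.2 hsa)) (by linarith : (0:ℝ) ≤ s + a)]
end

section
/- For all real numbers $n_2 \geq n_3 \geq 1$, one has $9(n_2^4 n_3^2 + n_2^2 n_3^4) + 14 n_2^3 n_3^3 \geq \frac{9}{16(1+\sqrt{2})} \sqrt{n_2} \cdot \big((n_2+n_3)^{3/2} + n_2^{3/2} + n_3^{3/2}\big)\big(3(n_2^2 n_3 + n_2 n_3^2) + 2 n_2^{3/2} n_3^{3/2}\big)$. -/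
lemma rpow32 (x : ℝ) (hx : 0 ≤ x) : x ^ ((3:ℝ)/2) = Real.sqrt x ^ 3 := by
  rw [Real.sqrt_eq_rpow, ← Real.rpow_natCast (x ^ ((1:ℝ)/2)) 3, ← Real.rpow_mul hx]
  norm_num

theorem stmt_2 (n2 n3 : ℝ) (h3 : 1 ≤ n3) (h23 : n3 ≤ n2) :
    9 * (n2 ^ (4:ℕ) * n3 ^ (2:ℕ) + n2 ^ (2:ℕ) * n3 ^ (4:ℕ)) + 14 * n2 ^ (3:ℕ) * n3 ^ (3:ℕ)
      ≥ 9 / (16 * (1 + Real.sqrt 2)) * Real.sqrt n2 *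
        (((n2 + n3) ^ ((3:ℝ)/2) + n2 ^ ((3:ℝ)/2) + n3 ^ ((3:ℝ)/2)) *
          (3 * (n2 ^ (2:ℕ) * n3 + n2 * n3 ^ (2:ℕ)) + 2 * n2 ^ ((3:ℝ)/2) * n3 ^ ((3:ℝ)/2))) := by
  have hn3 : (0:ℝ) ≤ n3 := le_trans zero_le_one h3
  have hn2 : (0:ℝ) ≤ n2 := le_trans hn3 h23
  have hnn : (0:ℝ) ≤ n2 + n3 := by linarith
  set a := Real.sqrt n2 with hadef
  set b := Real.sqrt n3 with hbdef
  set c := Real.sqrt (n2 + n3) with hcdef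
  set s := Real.sqrt 2 with hsdef
  have ha0 : 0 ≤ a := Real.sqrt_nonneg _
  have hb0 : 0 ≤ b := Real.sqrt_nonneg _
  have hc0 : 0 ≤ c := Real.sqrt_nonneg _
  have hs0 : 0 ≤ s := Real.sqrt_nonneg _
  have ha2 : a ^ 2 = n2 := Real.sq_sqrt hn2
  have hb2 : b ^ 2 = n3 := Real.sq_sqrt hn3
  have hs2 : s ^ 2 = 2 := Real.sq_sqrt (by norm_num)
  have hb1 : 1 ≤ b := by
    rw [hbdef]; simpa using Real.sqrt_le_sqrt h3
  have hab : b ≤ a := Real.sqrt_le_sqrt h23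
  have hs1 : 1 ≤ s := by nlinarith
  have hca : c ≤ s * a := by
    have : Real.sqrt (n2 + n3) ≤ Real.sqrt (2 * n2) := Real.sqrt_le_sqrt (by linarith)
    rwa [Real.sqrt_mul (by norm_num) n2] at this
  rw [ge_iff_le, rpow32 _ hnn, rpow32 _ hn2, rpow32 _ hn3, ← hcdef, ← hadef, ← hbdef,
    ← ha2, ← hb2]
  have hK : (0:ℝ) < 1 + s := by linarith
  have hG : 0 ≤ 3 * ((a^2) ^ (2:ℕ) * b^2 + a^2 * (b^2) ^ (2:ℕ)) + 2 * a ^ 3 * b ^ 3 := by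
    positivity
  have h1 : c ^ 3 + a ^ 3 + b ^ 3 ≤ 2 * (1 + s) * a ^ 3 := by
    have hc3 : c ^ 3 ≤ (s * a) ^ 3 := pow_le_pow_left₀ hc0 hca 3
    have hb3 : b ^ 3 ≤ a ^ 3 := pow_le_pow_left₀ hb0 hab 3
    have hs3 : (s * a) ^ 3 = 2 * s * a ^ 3 := by
      rw [mul_pow, pow_succ s 2, hs2]
    nlinarith [pow_nonneg ha0 3]
  have hcoef : 0 ≤ 9 / (16 * (1 + s)) * a := by positivity
  have h2 : 9 / (16 * (1 + s)) * a *
      ((c ^ 3 + a ^ 3 + b ^ 3) *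
        (3 * ((a^2) ^ (2:ℕ) * b^2 + a^2 * (b^2) ^ (2:ℕ)) + 2 * a ^ 3 * b ^ 3))
      ≤ 9 / (16 * (1 + s)) * a *
      ((2 * (1 + s) * a ^ 3) *
        (3 * ((a^2) ^ (2:ℕ) * b^2 + a^2 * (b^2) ^ (2:ℕ)) + 2 * a ^ 3 * b ^ 3)) := by
    apply mul_le_mul_of_nonneg_left _ hcoef
    exact mul_le_mul_of_nonneg_right h1 hG
  have h3' : 9 / (16 * (1 + s)) * a *
      ((2 * (1 + s) * a ^ 3) *
        (3 * ((a^2) ^ (2:ℕ) * b^2 + a^2 * (b^2) ^ (2:ℕ)) + 2 * a ^ 3 * b ^ 3))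
      = 9 / 8 * a ^ 4 *
        (3 * ((a^2) ^ (2:ℕ) * b^2 + a^2 * (b^2) ^ (2:ℕ)) + 2 * a ^ 3 * b ^ 3) := by
    field_simp
    ring
  have h4 : 9 / 8 * a ^ 4 *
      (3 * ((a^2) ^ (2:ℕ) * b^2 + a^2 * (b^2) ^ (2:ℕ)) + 2 * a ^ 3 * b ^ 3)
      ≤ 9 * ((a^2) ^ (4:ℕ) * (b^2) ^ (2:ℕ) + (a^2) ^ (2:ℕ) * (b^2) ^ (4:ℕ))
        + 14 * (a^2) ^ (3:ℕ) * (b^2) ^ (3:ℕ) := by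
    have ha1 : (1:ℝ) ≤ a := le_trans hb1 hab
    have t1 : a^8 * b^2 ≤ a^8 * b^4 :=
      mul_le_mul_of_nonneg_left (pow_le_pow_right₀ hb1 (by norm_num)) (pow_nonneg ha0 8)
    have t2 : a^6 * b^4 ≤ a^6 * b^6 :=
      mul_le_mul_of_nonneg_left (pow_le_pow_right₀ hb1 (by norm_num)) (pow_nonneg ha0 6)
    have t3 : a^7 * b^3 ≤ a^8 * b^4 :=
      mul_le_mul (pow_le_pow_right₀ ha1 (by norm_num)) (pow_le_pow_right₀ hb1 (by norm_num))
        (pow_nonneg hb0 3) (pow_nonneg ha0 8)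
    nlinarith [t1, t2, t3, mul_nonneg (pow_nonneg ha0 4) (pow_nonneg hb0 8),
      mul_nonneg (pow_nonneg ha0 8) (pow_nonneg hb0 4),
      mul_nonneg (pow_nonneg ha0 6) (pow_nonneg hb0 6)]
  calc 9 / (16 * (1 + s)) * a *
      ((c ^ 3 + a ^ 3 + b ^ 3) *
        (3 * ((a^2) ^ (2:ℕ) * b^2 + a^2 * (b^2) ^ (2:ℕ)) + 2 * a ^ 3 * b ^ 3))
      ≤ 9 / 8 * a ^ 4 *
        (3 * ((a^2) ^ (2:ℕ) * b^2 + a^2 * (b^2) ^ (2:ℕ)) + 2 * a ^ 3 * b ^ 3) := h3' ▸ h2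
    _ ≤ _ := h4
end

section
/- Let $g \geq 0$, $\kappa > 0$, $h > 0$ and $\Omega(n) = \sqrt{|n|\tanh(h|n|)(g+\kappa n^2)}$. There exist constants $\mathtt{c} > 0$ and $\mathtt{C} > 0$ such that for any $n_1, n_2, n_3 \in \mathbb{Z}\setminus\{0\}$ and any signs $\sigma, \sigma' \in \{+1,-1\}$ satisfying $n_1 + \sigma n_2 + \sigma' n_3 = 0$ and $\max(|n_1|,|n_2|,|n_3|) \geq \mathtt{C}$, one has $|\Omega(n_1) + \sigma\Omega(n_2) + \sigma'\Omega(n_3)| \geq \mathtt{c}$. -/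
set_option maxHeartbeats 1000000

theorem sqrt_upper (A B b : ℝ) (hBA : B ≤ A) (hb : 0 < b) (hb2 : b^2 = B) :
    Real.sqrt A ≤ b + (A - B)/(2*b) := by
  have he : 0 ≤ (A - B)/(2*b) := div_nonneg (by linarith) (by linarith)
  calc Real.sqrt A ≤ Real.sqrt ((b + (A-B)/(2*b))^2) := by
        apply Real.sqrt_le_sqrt
        have h2b : (2*b) ≠ 0 := by positivity
        have : (b + (A-B)/(2*b))^2 = b^2 + (A-B) + ((A-B)/(2*b))^2 := by
          field_simp; ring
        nlinarith [sq_nonneg ((A-B)/(2*b))]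
    _ = b + (A - B)/(2*b) := Real.sqrt_sq (by positivity)

theorem key_div (κ h x b : ℝ) (hh : 0 < h) (hx0 : 0 < x)
    (hbx2 : b ≤ Real.sqrt κ * x^2) :
    (2/(h*x)^2) * b ≤ 2*Real.sqrt κ/h^2 := by
  rw [div_mul_eq_mul_div, div_le_div_iff₀ (by positivity) (by positivity)]
  have h1 := mul_le_mul_of_nonneg_right hbx2 (sq_nonneg h)
  ring_nf; ring_nf at h1
  nlinarith [sq_nonneg h, sq_nonneg x, Real.sqrt_nonneg κ]

theorem key_div2 (g κ x : ℝ) (hg : 0 ≤ g) (hκ : 0 < κ) (hx0 : 0 < x)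
    (hsx : 1 ≤ Real.sqrt x) :
    (g*x)/(2*(Real.sqrt κ * (x * Real.sqrt x))) ≤ g/(2*Real.sqrt κ) := by
  have hsκ : 0 < Real.sqrt κ := Real.sqrt_pos.2 hκ
  have h0 : 0 < Real.sqrt x := by linarith
  rw [div_le_div_iff₀ (by positivity) (by positivity)]
  nlinarith [mul_nonneg (mul_nonneg (mul_nonneg hg hx0.le) hsκ.le) (sub_nonneg.2 hsx)]

theorem Om_bounds (g κ h x : ℝ) (hg : 0 ≤ g) (hκ : 0 < κ) (hh : 0 < h) (hx : 1 ≤ x) :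
    Real.sqrt κ * (x * Real.sqrt x) - 2*Real.sqrt κ/h^2
      ≤ Real.sqrt (x * Real.tanh (h*x) * (g + κ*x^2))
    ∧ Real.sqrt (x * Real.tanh (h*x) * (g + κ*x^2))
      ≤ Real.sqrt κ * (x * Real.sqrt x) + g/(2*Real.sqrt κ) := by
  have hx0 : (0:ℝ) < x := by linarith
  have hsx : 1 ≤ Real.sqrt x := by
    rw [show (1:ℝ) = Real.sqrt 1 by simp]; exact Real.sqrt_le_sqrt hx
  have hsx2 : Real.sqrt x ^ 2 = x := Real.sq_sqrt hx0.le
  have hsκ : 0 < Real.sqrt κ := Real.sqrt_pos.2 hκ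
  have hsκ2 : Real.sqrt κ ^ 2 = κ := Real.sq_sqrt hκ.le
  set b := Real.sqrt κ * (x * Real.sqrt x) with hbdef
  have hb0 : 0 < b := by positivity
  clear_value b
  have hb2 : b^2 = κ * x^3 := by
    rw [hbdef, mul_pow, mul_pow, hsκ2, hsx2]; ring
  have hsxx : Real.sqrt x ≤ x := by nlinarith [hsx, hsx2]
  have hbx2 : b ≤ Real.sqrt κ * x^2 := by
    rw [hbdef]
    nlinarith [mul_nonneg (mul_nonneg hsκ.le hx0.le) (sub_nonneg.2 hsxx)]
  set T := Real.tanh (h*x) with hT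
  clear_value T
  have hT1 : T ≤ 1 := by
    have hc : 0 < Real.cosh (h*x) := Real.cosh_pos (h*x)
    rw [hT, Real.tanh_eq_sinh_div_cosh, div_le_one hc, Real.cosh_eq, Real.sinh_eq]
    nlinarith [Real.exp_pos (-(h*x))]
  have hT0 : 0 ≤ T := by
    rw [hT, Real.tanh_eq_sinh_div_cosh]
    exact div_nonneg (Real.sinh_nonneg_iff.2 (by positivity)) (Real.cosh_pos _).le
  have hTl : 1 - 2/(h*x)^2 ≤ T := by
    have hy : 0 < h*x := by positivity
    have hc : 0 < Real.cosh (h*x) := Real.cosh_pos (h*x)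
    have h1 : 1 - T = Real.exp (-(h*x)) / Real.cosh (h*x) := by
      rw [hT, Real.tanh_eq_sinh_div_cosh, Real.cosh_eq, Real.sinh_eq]
      field_simp; ring
    have h2 : Real.exp (h*x) / 2 ≤ Real.cosh (h*x) := by
      rw [Real.cosh_eq]; nlinarith [Real.exp_pos (-(h*x))]
    have hE : h*x + 1 ≤ Real.exp (h*x) := Real.add_one_le_exp (h*x)
    have hEpos : 0 < Real.exp (h*x) := Real.exp_pos _
    have h3 : Real.exp (-(h*x)) / Real.cosh (h*x) ≤ 2 / (h*x)^2 := by
      rw [Real.exp_neg, div_le_div_iff₀ (by positivity) (by positivity)]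
      have : (Real.exp (h*x))⁻¹ * Real.exp (h*x) = 1 := inv_mul_cancel₀ (ne_of_gt hEpos)
      nlinarith [mul_pos hEpos hEpos, inv_nonneg.2 hEpos.le]
    linarith
  constructor
  · -- lower bound
    have step1 : Real.sqrt (T * (κ * x^3)) ≤ Real.sqrt (x * T * (g + κ*x^2)) := by
      apply Real.sqrt_le_sqrt
      nlinarith [mul_nonneg hT0 (mul_nonneg hg hx0.le)]
    have step2 : Real.sqrt (T * (κ * x^3)) = Real.sqrt T * b := by
      rw [Real.sqrt_mul hT0, show κ * x^3 = b^2 by rw [hb2], Real.sqrt_sq hb0.le]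
    have step3 : T ≤ Real.sqrt T := by
      nlinarith [Real.sq_sqrt hT0, Real.sqrt_nonneg T]
    have step4 : T * b ≤ Real.sqrt T * b := mul_le_mul_of_nonneg_right step3 hb0.le
    have step5 : b - 2*Real.sqrt κ/h^2 ≤ T * b := by
      have h1 : (1 - 2/(h*x)^2) * b ≤ T * b := mul_le_mul_of_nonneg_right hTl hb0.le
      have h2 : b - 2*Real.sqrt κ/h^2 ≤ (1 - 2/(h*x)^2) * b := by
        have key := key_div κ h x b hh hx0 hbx2
        have expand : (1 - 2/(h*x)^2) * b = b - (2/(h*x)^2)*b := by ring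
        linarith
      linarith
    calc b - 2*Real.sqrt κ/h^2 ≤ T * b := step5
      _ ≤ Real.sqrt T * b := step4
      _ = Real.sqrt (T * (κ * x^3)) := step2.symm
      _ ≤ Real.sqrt (x * T * (g + κ*x^2)) := step1
  · -- upper bound
    have step1 : Real.sqrt (x * T * (g + κ*x^2)) ≤ Real.sqrt (g*x + κ*x^3) := by
      apply Real.sqrt_le_sqrt
      nlinarith [mul_nonneg hg hx0.le]
    have step2 : Real.sqrt (g*x + κ*x^3) ≤ b + (g*x)/(2*b) := by
      have h := sqrt_upper (g*x + κ*x^3) (κ*x^3) b (by nlinarith) hb0 hb2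
      have e : g*x + κ*x^3 - κ*x^3 = g*x := by ring
      rw [e] at h
      exact h
    have step3 : (g*x)/(2*b) ≤ g/(2*Real.sqrt κ) := by
      rw [hbdef]; exact key_div2 g κ x hg hκ hx0 hsx
    calc Real.sqrt (x * T * (g + κ*x^2)) ≤ Real.sqrt (g*x + κ*x^3) := step1
      _ ≤ b + (g*x)/(2*b) := step2
      _ ≤ b + g/(2*Real.sqrt κ) := by linarith


theorem sup_sqrt (a b : ℝ) (ha : 1 ≤ a) (hab : a ≤ b) :
    a * Real.sqrt a + b * Real.sqrt b + (1/4) * Real.sqrt b ≤ (a+b) * Real.sqrt (a+b) := by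
  have h0a : (0:ℝ) ≤ a := by linarith
  have h0b : (0:ℝ) ≤ b := by linarith
  have hu2 : (Real.sqrt a)^2 = a := Real.sq_sqrt h0a
  have hv2 : (Real.sqrt b)^2 = b := Real.sq_sqrt h0b
  have hw2 : (Real.sqrt (a+b))^2 = a + b := Real.sq_sqrt (by linarith)
  have hu1 : 1 ≤ Real.sqrt a := by
    rw [show (1:ℝ) = Real.sqrt 1 by simp]; exact Real.sqrt_le_sqrt ha
  have huv : Real.sqrt a ≤ Real.sqrt b := Real.sqrt_le_sqrt hab
  have h0w : 0 ≤ Real.sqrt (a+b) := Real.sqrt_nonneg _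
  set u := Real.sqrt a
  set v := Real.sqrt b
  set w := Real.sqrt (a+b)
  clear_value u v w
  have hw2' : w^2 = u^2 + v^2 := by rw [hw2, hu2, hv2]
  have key : u^2*u + v^2*v + (1/4)*v ≤ (u^2+v^2)*w := by
    have hvw : v ≤ w := by nlinarith
    have hwuv : w ≤ u + v := by nlinarith
    nlinarith [mul_nonneg (mul_nonneg (sq_nonneg u) (sub_nonneg.2 hvw)) (sub_nonneg.2 hwuv),
      mul_nonneg (sub_nonneg.2 huv) (sub_nonneg.2 hvw), sq_nonneg (w - v),
      mul_nonneg (mul_nonneg (sub_nonneg.2 hu1) (sub_nonneg.2 huv)) h0w,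
      mul_nonneg (mul_nonneg (sub_nonneg.2 hu1) (sub_nonneg.2 hvw)) h0w]
  calc a * u + b * v + (1/4) * v = u^2*u + v^2*v + (1/4)*v := by rw [hu2, hv2]
    _ ≤ (u^2+v^2)*w := key
    _ = (a+b)*w := by rw [hu2, hv2]


noncomputable def Om (g κ h x : ℝ) : ℝ := Real.sqrt (x * Real.tanh (h*x) * (g + κ*x^2))

theorem key_lemma (g κ h : ℝ) (hg : 0 ≤ g) (hκ : 0 < κ) (hh : 0 < h)
    (a b : ℝ) (ha : 1 ≤ a) (hb : 1 ≤ b) (t t' : ℝ)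
    (ht : t = 1 ∨ t = -1) (ht' : t' = 1 ∨ t' = -1) :
    Real.sqrt κ/4 * Real.sqrt (max a b)
      - 3*(g/(2*Real.sqrt κ) + 2*Real.sqrt κ/h^2)
      ≤ |Om g κ h (a+b) + t * Om g κ h a + t' * Om g κ h b| := by
  set K := g/(2*Real.sqrt κ) + 2*Real.sqrt κ/h^2 with hK
  have hsκ : 0 < Real.sqrt κ := Real.sqrt_pos.2 hκ
  have hab1 : 1 ≤ a + b := by linarith
  obtain ⟨lA, uA⟩ := Om_bounds g κ h a hg hκ hh ha
  obtain ⟨lB, uB⟩ := Om_bounds g κ h b hg hκ hh hb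
  obtain ⟨lAB, uAB⟩ := Om_bounds g κ h (a+b) hg hκ hh hab1
  rw [show Real.sqrt (a * Real.tanh (h*a) * (g + κ*a^2)) = Om g κ h a from rfl] at lA uA
  rw [show Real.sqrt (b * Real.tanh (h*b) * (g + κ*b^2)) = Om g κ h b from rfl] at lB uB
  rw [show Real.sqrt ((a+b) * Real.tanh (h*(a+b)) * (g + κ*(a+b)^2)) = Om g κ h (a+b) from rfl]
    at lAB uAB
  -- superadditivity of ω
  have hsup : Real.sqrt κ * (a * Real.sqrt a) + Real.sqrt κ * (b * Real.sqrt b)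
      + Real.sqrt κ/4 * Real.sqrt (max a b) ≤ Real.sqrt κ * ((a+b) * Real.sqrt (a+b)) := by
    rcases le_total a b with hab | hab
    · rw [max_eq_right hab]
      have := mul_le_mul_of_nonneg_left (sup_sqrt a b ha hab) hsκ.le
      ring_nf at this ⊢
      linarith
    · rw [max_eq_left hab]
      have h1 := sup_sqrt b a hb hab
      rw [show b + a = a + b by ring] at h1
      have := mul_le_mul_of_nonneg_left h1 hsκ.le
      ring_nf at this ⊢
      linarith
  have hωa : 0 ≤ Real.sqrt κ * (a * Real.sqrt a) := by positivity
  have hωb : 0 ≤ Real.sqrt κ * (b * Real.sqrt b) := by positivity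
  have he1 : 0 ≤ g/(2*Real.sqrt κ) := by positivity
  have he2 : 0 ≤ 2*Real.sqrt κ/h^2 := by positivity
  rcases ht with rfl | rfl <;> rcases ht' with rfl | rfl <;>
    refine le_trans ?_ (le_abs_self _) <;> linarith


theorem final_bound (g κ h : ℝ) (hg : 0 ≤ g) (hκ : 0 < κ) (hh : 0 < h)
    (a b t t' : ℝ) (ha : 1 ≤ a) (hb : 1 ≤ b)
    (ht : t = 1 ∨ t = -1) (ht' : t' = 1 ∨ t' = -1)
    (hm : (4*(3*(g/(2*Real.sqrt κ) + 2*Real.sqrt κ/h^2)+1)/Real.sqrt κ)^2 ≤ max a b) :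
    (1:ℝ) ≤ |Om g κ h (a+b) + t * Om g κ h a + t' * Om g κ h b| := by
  have hsκ : 0 < Real.sqrt κ := Real.sqrt_pos.2 hκ
  set K := g/(2*Real.sqrt κ) + 2*Real.sqrt κ/h^2 with hK
  have hK0 : 0 < 3*K+1 := by
    have h1 : 0 ≤ g/(2*Real.sqrt κ) := by positivity
    have h2 : 0 ≤ 2*Real.sqrt κ/h^2 := by positivity
    rw [hK]; linarith
  set R := 4*(3*K+1)/Real.sqrt κ with hR
  have hR0 : 0 < R := by rw [hR]; positivity
  have h1 : R ≤ Real.sqrt (max a b) := by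
    calc R = Real.sqrt (R^2) := (Real.sqrt_sq hR0.le).symm
      _ ≤ Real.sqrt (max a b) := Real.sqrt_le_sqrt hm
  have h2 : Real.sqrt κ/4 * R - 3*K = 1 := by
    rw [hR]; field_simp; ring
  have h3 := key_lemma g κ h hg hκ hh a b ha hb t t' ht ht'
  have h4 : Real.sqrt κ/4 * R ≤ Real.sqrt κ/4 * Real.sqrt (max a b) :=
    mul_le_mul_of_nonneg_left h1 (by positivity)
  rw [← hK] at h3
  linarith

theorem final_bound' (g κ h : ℝ) (hg : 0 ≤ g) (hκ : 0 < κ) (hh : 0 < h)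
    (a b t t' : ℝ) (ha : 1 ≤ a) (hb : 1 ≤ b)
    (ht : t = 1 ∨ t = -1) (ht' : t' = 1 ∨ t' = -1)
    (hm : (4*(3*(g/(2*Real.sqrt κ) + 2*Real.sqrt κ/h^2)+1)/Real.sqrt κ)^2 ≤ max a b)
    (X : ℝ)
    (hX : X = Om g κ h (a+b) + t * Om g κ h a + t' * Om g κ h b
        ∨ X = -(Om g κ h (a+b) + t * Om g κ h a + t' * Om g κ h b)) :
    (1:ℝ) ≤ |X| := by
  rcases hX with rfl | rfl
  · exact final_bound g κ h hg hκ hh a b t t' ha hb ht ht' hm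
  · rw [abs_neg]; exact final_bound g κ h hg hκ hh a b t t' ha hb ht ht' hm

theorem stmt_4 (g κ h : ℝ) (hg : 0 ≤ g) (hκ : 0 < κ) (hh : 0 < h) :
    ∃ c > 0, ∃ C > 0,
      ∀ (n1 n2 n3 : ℤ) (σ σ' : ℤ),
        n1 ≠ 0 → n2 ≠ 0 → n3 ≠ 0 →
        (σ = 1 ∨ σ = -1) → (σ' = 1 ∨ σ' = -1) →
        n1 + σ * n2 + σ' * n3 = 0 →
        (C : ℝ) ≤ max |(n1:ℝ)| (max |(n2:ℝ)| |(n3:ℝ)|) →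
        c ≤ |Real.sqrt (|(n1:ℝ)| * Real.tanh (h * |(n1:ℝ)|) * (g + κ * (n1:ℝ) ^ 2))
            + (σ:ℝ) * Real.sqrt (|(n2:ℝ)| * Real.tanh (h * |(n2:ℝ)|) * (g + κ * (n2:ℝ) ^ 2))
            + (σ':ℝ) * Real.sqrt (|(n3:ℝ)| * Real.tanh (h * |(n3:ℝ)|) * (g + κ * (n3:ℝ) ^ 2))| := by
  set R := 4*(3*(g/(2*Real.sqrt κ) + 2*Real.sqrt κ/h^2)+1)/Real.sqrt κ with hRdef
  have hsκ : 0 < Real.sqrt κ := Real.sqrt_pos.2 hκ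
  have hR0 : 0 < R := by rw [hRdef]; positivity
  refine ⟨1, one_pos, 2*R^2+1, by positivity, ?_⟩
  intro n1 n2 n3 σ σ' h1 h2 h3 hσ hσ' hsum hmax
  -- integer relation
  have hrel : |n1| = |n2| + |n3| ∨ |n2| = |n1| + |n3| ∨ |n3| = |n1| + |n2| := by
    rcases hσ with rfl | rfl <;> rcases hσ' with rfl | rfl <;>
      rcases abs_cases n1 with ⟨e1, _⟩ | ⟨e1, _⟩ <;>
      rcases abs_cases n2 with ⟨e2, _⟩ | ⟨e2, _⟩ <;>
      rcases abs_cases n3 with ⟨e3, _⟩ | ⟨e3, _⟩ <;> omega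
  have hA1 : (1:ℝ) ≤ |(n1:ℝ)| := by
    have : (1:ℤ) ≤ |n1| := by rcases abs_cases n1 with ⟨e, _⟩ | ⟨e, _⟩ <;> omega
    calc (1:ℝ) ≤ ((|n1| : ℤ) : ℝ) := by exact_mod_cast this
      _ = |(n1:ℝ)| := by push_cast; ring
  have hA2 : (1:ℝ) ≤ |(n2:ℝ)| := by
    have : (1:ℤ) ≤ |n2| := by rcases abs_cases n2 with ⟨e, _⟩ | ⟨e, _⟩ <;> omega
    calc (1:ℝ) ≤ ((|n2| : ℤ) : ℝ) := by exact_mod_cast this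
      _ = |(n2:ℝ)| := by push_cast; ring
  have hA3 : (1:ℝ) ≤ |(n3:ℝ)| := by
    have : (1:ℤ) ≤ |n3| := by rcases abs_cases n3 with ⟨e, _⟩ | ⟨e, _⟩ <;> omega
    calc (1:ℝ) ≤ ((|n3| : ℤ) : ℝ) := by exact_mod_cast this
      _ = |(n3:ℝ)| := by push_cast; ring
  rw [← sq_abs ((n1:ℝ)), ← sq_abs ((n2:ℝ)), ← sq_abs ((n3:ℝ))]
  set A1 := |(n1:ℝ)| with hA1def
  set A2 := |(n2:ℝ)| with hA2def
  set A3 := |(n3:ℝ)| with hA3def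
  have hσR : (σ:ℝ) = 1 ∨ (σ:ℝ) = -1 := by
    rcases hσ with rfl | rfl <;> [left; right] <;> norm_num
  have hσ'R : (σ':ℝ) = 1 ∨ (σ':ℝ) = -1 := by
    rcases hσ' with rfl | rfl <;> [left; right] <;> norm_num
  show (1:ℝ) ≤ |Om g κ h A1 + (σ:ℝ) * Om g κ h A2 + (σ':ℝ) * Om g κ h A3|
  rcases hrel with hrel | hrel | hrel
  · -- A1 = A2 + A3
    have heq : A1 = A2 + A3 := by
      rw [hA1def, hA2def, hA3def]; exact_mod_cast congrArg (Int.cast : ℤ → ℝ) hrel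
    have hmp := le_max_left A2 A3
    have hmq := le_max_right A2 A3
    have hMle : max A1 (max A2 A3) ≤ 2 * max A2 A3 :=
      max_le (by linarith) (max_le (by linarith) (by linarith))
    have hm : R^2 ≤ max A2 A3 := by linarith
    rw [heq]
    exact final_bound' g κ h hg hκ hh A2 A3 (σ:ℝ) (σ':ℝ) hA2 hA3 hσR hσ'R hm _
      (Or.inl (by ring))
  · -- A2 = A1 + A3
    have heq : A2 = A1 + A3 := by
      rw [hA1def, hA2def, hA3def]; exact_mod_cast congrArg (Int.cast : ℤ → ℝ) hrel
    have hmp := le_max_left A1 A3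
    have hmq := le_max_right A1 A3
    have hMle : max A1 (max A2 A3) ≤ 2 * max A1 A3 :=
      max_le (by linarith) (max_le (by linarith) (by linarith))
    have hm : R^2 ≤ max A1 A3 := by linarith
    rw [heq]
    rcases hσR with hs | hs <;> rw [hs]
    · exact final_bound' g κ h hg hκ hh A1 A3 1 (σ':ℝ) hA1 hA3 (Or.inl rfl) hσ'R hm _
        (Or.inl (by ring))
    · exact final_bound' g κ h hg hκ hh A1 A3 (-1) (-(σ':ℝ)) hA1 hA3 (Or.inr rfl)
        (by rcases hσ'R with hs' | hs' <;> rw [hs'] <;> norm_num) hm _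
        (Or.inr (by ring))
  · -- A3 = A1 + A2
    have heq : A3 = A1 + A2 := by
      rw [hA1def, hA2def, hA3def]; exact_mod_cast congrArg (Int.cast : ℤ → ℝ) hrel
    have hmp := le_max_left A1 A2
    have hmq := le_max_right A1 A2
    have hMle : max A1 (max A2 A3) ≤ 2 * max A1 A2 :=
      max_le (by linarith) (max_le (by linarith) (by linarith))
    have hm : R^2 ≤ max A1 A2 := by linarith
    rw [heq]
    rcases hσ'R with hs | hs <;> rw [hs]
    · exact final_bound' g κ h hg hκ hh A1 A2 1 (σ:ℝ) hA1 hA2 (Or.inl rfl) hσR hm _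
        (Or.inl (by ring))
    · exact final_bound' g κ h hg hκ hh A1 A2 (-1) (-(σ:ℝ)) hA1 hA2 (Or.inr rfl)
        (by rcases hσR with hs' | hs' <;> rw [hs'] <;> norm_num) hm _
        (Or.inr (by ring))
end

section
/- Let $g \geq 0$, $\kappa > 0$, $h > 0$ and $\Omega(n) = \sqrt{|n|\tanh(h|n|)(g+\kappa n^2)}$. The set of triples $(j_1, j_2, j_3) \in (\mathbb{Z}\setminus\{0\})^3$ together with signs $(\sigma_1,\sigma_2,\sigma_3) \in \{\pm 1\}^3$ satisfying both $\sigma_1 j_1 + \sigma_2 j_2 + \sigma_3 j_3 = 0$ and $\sigma_1\Omega(j_1) + \sigma_2\Omega(j_2) + \sigma_3\Omega(j_3) = 0$ is finite. -/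
lemma tanh_formula (x : ℝ) :
    Real.tanh x = (Real.exp x ^ 2 - 1) / (Real.exp x ^ 2 + 1) := by
  rw [Real.tanh_eq_sinh_div_cosh, Real.sinh_eq, Real.cosh_eq, Real.exp_neg]
  have h1 : Real.exp x ≠ 0 := (Real.exp_pos x).ne'
  have h2 : Real.exp x ^ 2 + 1 ≠ 0 := by positivity
  field_simp

lemma tanh_pos' {x : ℝ} (hx : 0 < x) : 0 < Real.tanh x := by
  rw [tanh_formula]
  have h1 : 1 < Real.exp x := by nlinarith [Real.add_one_lt_exp hx.ne']
  have h2 : (0:ℝ) < Real.exp x ^ 2 + 1 := by positivity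
  apply div_pos _ h2
  nlinarith

lemma tanh_mono' {x y : ℝ} (hxy : x ≤ y) : Real.tanh x ≤ Real.tanh y := by
  rw [tanh_formula, tanh_formula]
  have h1 : Real.exp x ≤ Real.exp y := Real.exp_le_exp.2 hxy
  have h2 : (0:ℝ) < Real.exp x := Real.exp_pos x
  have h3 : (0:ℝ) < Real.exp x ^ 2 + 1 := by positivity
  have h4 : (0:ℝ) < Real.exp y ^ 2 + 1 := by positivity
  rw [div_le_div_iff₀ h3 h4]
  nlinarith

section om
variable {g κ h : ℝ} (hg : 0 ≤ g) (hκ : 0 < κ) (hh : 0 < h)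
include hg hκ hh

lemma Om_pos {x : ℝ} (hx : 0 < x) : 0 < Om g κ h x := by
  apply Real.sqrt_pos.2
  have := tanh_pos' (mul_pos hh hx)
  positivity

lemma Om_mono {x y : ℝ} (hx : 0 ≤ x) (hxy : x ≤ y) : Om g κ h x ≤ Om g κ h y := by
  apply Real.sqrt_le_sqrt
  have hy : 0 ≤ y := hx.trans hxy
  have t1 : 0 ≤ Real.tanh (h*x) := by
    rcases eq_or_lt_of_le hx with rfl | hx'
    · simp
    · exact (tanh_pos' (mul_pos hh hx')).le
  have t2 : Real.tanh (h*x) ≤ Real.tanh (h*y) :=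
    tanh_mono' (by nlinarith)
  have : x^2 ≤ y^2 := by nlinarith
  have hgx : 0 ≤ g + κ*x^2 := by positivity
  calc x * Real.tanh (h*x) * (g + κ*x^2) ≤ y * Real.tanh (h*y) * (g + κ*x^2) := by
        apply mul_le_mul_of_nonneg_right _ hgx
        exact mul_le_mul hxy t2 t1 hy
    _ ≤ y * Real.tanh (h*y) * (g + κ*y^2) := by
        apply mul_le_mul_of_nonneg_left (by nlinarith)
        exact mul_nonneg hy (t1.trans t2)

lemma Om_key {a b : ℝ} (ha : 1 ≤ a) (hb : 1 ≤ b) (hab : g ≤ κ*a*b) :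
    Om g κ h a + Om g κ h b < Om g κ h (a+b) := by
  have ha0 : (0:ℝ) < a := by linarith
  have hb0 : (0:ℝ) < b := by linarith
  set τ := Real.tanh (h*(a+b)) with hτdef
  have hτ : 0 < τ := tanh_pos' (by nlinarith)
  have hGa : (0:ℝ) ≤ a*(g+κ*a^2) := by positivity
  have hGb : (0:ℝ) ≤ b*(g+κ*b^2) := by positivity
  have hGab : (0:ℝ) ≤ (a+b)*(g+κ*(a+b)^2) := by positivity
  -- Om a ≤ √τ * √(Ga)
  have bd : ∀ x : ℝ, 0 < x → x ≤ a + b →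
      Om g κ h x ≤ Real.sqrt τ * Real.sqrt (x*(g+κ*x^2)) := by
    intro x hx hxab
    rw [← Real.sqrt_mul hτ.le]
    apply Real.sqrt_le_sqrt
    have t2 : Real.tanh (h*x) ≤ τ := tanh_mono' (by nlinarith)
    have hgx : (0:ℝ) ≤ x*(g+κ*x^2) := by positivity
    nlinarith [tanh_pos' (mul_pos hh hx)]
  have eq3 : Om g κ h (a+b) = Real.sqrt τ * Real.sqrt ((a+b)*(g+κ*(a+b)^2)) := by
    rw [← Real.sqrt_mul hτ.le, Om]; congr 1; rw [hτdef]; ring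
  have main : Real.sqrt (a*(g+κ*a^2)) + Real.sqrt (b*(g+κ*b^2))
      < Real.sqrt ((a+b)*(g+κ*(a+b)^2)) := by
    have hs : (0:ℝ) ≤ Real.sqrt (a*(g+κ*a^2)) + Real.sqrt (b*(g+κ*b^2)) := by positivity
    rw [show Real.sqrt (a*(g+κ*a^2)) + Real.sqrt (b*(g+κ*b^2))
        = Real.sqrt (a*(g+κ*a^2)) + Real.sqrt (b*(g+κ*b^2)) from rfl]
    have h2 : (Real.sqrt (a*(g+κ*a^2)) + Real.sqrt (b*(g+κ*b^2)))^2
        < (a+b)*(g+κ*(a+b)^2) := by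
      have e1 : Real.sqrt (a*(g+κ*a^2)) ^ 2 = a*(g+κ*a^2) := Real.sq_sqrt hGa
      have e2 : Real.sqrt (b*(g+κ*b^2)) ^ 2 = b*(g+κ*b^2) := Real.sq_sqrt hGb
      have e3 : Real.sqrt (a*(g+κ*a^2)) * Real.sqrt (b*(g+κ*b^2))
          = Real.sqrt ((a*(g+κ*a^2))*(b*(g+κ*b^2))) := (Real.sqrt_mul hGa _).symm
      have cross : Real.sqrt ((a*(g+κ*a^2))*(b*(g+κ*b^2))) < (3/2)*κ*a*b*(a+b) := by
        have hrhs : (0:ℝ) < (3/2)*κ*a*b*(a+b) := by positivity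
        rw [show ((3:ℝ)/2)*κ*a*b*(a+b) = Real.sqrt (((3/2)*κ*a*b*(a+b))^2) from
          (Real.sqrt_sq hrhs.le).symm]
        apply Real.sqrt_lt_sqrt (by positivity)
        -- polynomial: 4 Ga Gb < 9 κ² a²b²(a+b)²  given g ≤ κ a b
        nlinarith [mul_pos ha0 hb0, sq_nonneg (a-b), sq_nonneg (a*b),
          mul_le_mul_of_nonneg_right hab (mul_pos ha0 hb0).le,
          mul_le_mul_of_nonneg_right hab (mul_pos (mul_pos ha0 ha0) hb0).le,
          mul_le_mul_of_nonneg_right hab (mul_pos (mul_pos hb0 hb0) ha0).le,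
          mul_le_mul_of_nonneg_right hab (mul_pos (mul_pos ha0 hb0) (mul_pos ha0 hb0)).le,
          mul_nonneg (mul_nonneg hg ha0.le) hb0.le]
      nlinarith [e1, e2]
    nlinarith [Real.sq_sqrt hGab, Real.sqrt_nonneg ((a+b)*(g+κ*(a+b)^2)), hs, h2]
  calc Om g κ h a + Om g κ h b
      ≤ Real.sqrt τ * Real.sqrt (a*(g+κ*a^2)) + Real.sqrt τ * Real.sqrt (b*(g+κ*b^2)) := by
        have := bd a ha0 (by linarith); have := bd b hb0 (by linarith); linarith
    _ = Real.sqrt τ * (Real.sqrt (a*(g+κ*a^2)) + Real.sqrt (b*(g+κ*b^2))) := by ring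
    _ < Real.sqrt τ * Real.sqrt ((a+b)*(g+κ*(a+b)^2)) := by
        apply mul_lt_mul_of_pos_left main (Real.sqrt_pos.2 hτ)
    _ = Om g κ h (a+b) := eq3.symm

end om
section core
variable {g κ h : ℝ} (hg : 0 ≤ g) (hκ : 0 < κ) (hh : 0 < h)
include hg hκ hh

lemma core (u v : ℤ) (hu : u ≠ 0) (hv : v ≠ 0) (huv : u + v ≠ 0)
    (hres : Om g κ h |(u:ℝ)| + Om g κ h |(v:ℝ)| = Om g κ h |((u:ℝ)+(v:ℝ))|) :
    |u| ≤ ⌈g/κ⌉ + 1 ∧ |v| ≤ ⌈g/κ⌉ + 1 ∧ |u+v| ≤ ⌈g/κ⌉ + 1 := by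
  have hu1 : (1:ℤ) ≤ |u| := by simp only [Int.abs_eq_natAbs]; omega
  have hv1 : (1:ℤ) ≤ |v| := by simp only [Int.abs_eq_natAbs]; omega
  have ha : (1:ℝ) ≤ |(u:ℝ)| := by
    rw [← Int.cast_abs]; exact_mod_cast hu1
  have hb : (1:ℝ) ≤ |(v:ℝ)| := by
    rw [← Int.cast_abs]; exact_mod_cast hv1
  have hOu : 0 < Om g κ h |(u:ℝ)| := Om_pos hg hκ hh (by linarith)
  have hOv : 0 < Om g κ h |(v:ℝ)| := Om_pos hg hκ hh (by linarith)
  have trich : |u+v| = |u| + |v| ∨ |u+v| ≤ |u| ∨ |u+v| ≤ |v| := by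
    simp only [Int.abs_eq_natAbs]; omega
  have hcast : |((u:ℝ)+(v:ℝ))| = ((|u+v| : ℤ) : ℝ) := by push_cast [Int.cast_abs]; ring_nf
  rcases trich with heq | hle | hle
  · -- |u+v| = |u| + |v|
    have key : |u| + |v| ≤ ⌈g/κ⌉ + 1 := by
      by_contra hcon
      push_neg at hcon
      have h2 : (⌈g/κ⌉ : ℝ) + 2 ≤ |(u:ℝ)| + |(v:ℝ)| := by
        rw [← Int.cast_abs, ← Int.cast_abs]
        have : (⌈g/κ⌉ : ℤ) + 2 ≤ |u| + |v| := by omega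
        exact_mod_cast this
      have hceil : g/κ ≤ (⌈g/κ⌉ : ℝ) := Int.le_ceil _
      have hprod : g/κ ≤ |(u:ℝ)| * |(v:ℝ)| := by nlinarith
      have hgab : g ≤ κ * |(u:ℝ)| * |(v:ℝ)| := by
        have := (div_le_iff₀ hκ).mp hprod
        nlinarith
      have := Om_key hg hκ hh ha hb hgab
      have habs : |((u:ℝ)+(v:ℝ))| = |(u:ℝ)| + |(v:ℝ)| := by
        rw [hcast, ← Int.cast_abs, ← Int.cast_abs, heq]; push_cast; ring
      rw [habs] at hres
      linarith
    refine ⟨by omega, by omega, by omega⟩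
  · -- mixed signs, |u+v| ≤ |u| : contradiction
    exfalso
    have : Om g κ h |((u:ℝ)+(v:ℝ))| ≤ Om g κ h |(u:ℝ)| := by
      apply Om_mono hg hκ hh (abs_nonneg _)
      rw [hcast, ← Int.cast_abs]
      exact_mod_cast hle
    linarith
  · exfalso
    have : Om g κ h |((u:ℝ)+(v:ℝ))| ≤ Om g κ h |(v:ℝ)| := by
      apply Om_mono hg hκ hh (abs_nonneg _)
      rw [hcast, ← Int.cast_abs]
      exact_mod_cast hle
    linarith

end core
section main
variable {g κ h : ℝ} (hg : 0 ≤ g) (hκ : 0 < κ) (hh : 0 < h)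
include hg hκ hh

lemma core' (u v w : ℤ) (hu : u ≠ 0) (hv : v ≠ 0) (hw : w ≠ 0) (hsum : u + v = w)
    (hres : Om g κ h |(u:ℝ)| + Om g κ h |(v:ℝ)| = Om g κ h |(w:ℝ)|) :
    |u| ≤ ⌈g/κ⌉ + 1 ∧ |v| ≤ ⌈g/κ⌉ + 1 ∧ |w| ≤ ⌈g/κ⌉ + 1 := by
  have hw' : (w:ℝ) = (u:ℝ) + (v:ℝ) := by exact_mod_cast hsum.symm
  rw [hw'] at hres
  have := core hg hκ hh u v hu hv (by omega) hres
  rw [hsum] at this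
  exact this

end main

lemma omrw (g κ h : ℝ) (j : ℤ) :
    Real.sqrt (|(j:ℝ)| * Real.tanh (h * |(j:ℝ)|) * (g + κ * (j:ℝ)^2))
      = Om g κ h |(j:ℝ)| := by
  rw [Om, sq_abs]

theorem stmt_5 (g κ h : ℝ) (hg : 0 ≤ g) (hκ : 0 < κ) (hh : 0 < h) :
    Set.Finite {p : (ℤ × ℤ × ℤ) × (ℤ × ℤ × ℤ) |
      let j1 := p.1.1; let j2 := p.1.2.1; let j3 := p.1.2.2
      let σ1 := p.2.1; let σ2 := p.2.2.1; let σ3 := p.2.2.2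
      j1 ≠ 0 ∧ j2 ≠ 0 ∧ j3 ≠ 0 ∧
      (σ1 = 1 ∨ σ1 = -1) ∧ (σ2 = 1 ∨ σ2 = -1) ∧ (σ3 = 1 ∨ σ3 = -1) ∧
      σ1 * j1 + σ2 * j2 + σ3 * j3 = 0 ∧
      (σ1:ℝ) * Real.sqrt (|(j1:ℝ)| * Real.tanh (h * |(j1:ℝ)|) * (g + κ * (j1:ℝ) ^ 2))
        + (σ2:ℝ) * Real.sqrt (|(j2:ℝ)| * Real.tanh (h * |(j2:ℝ)|) * (g + κ * (j2:ℝ) ^ 2))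
        + (σ3:ℝ) * Real.sqrt (|(j3:ℝ)| * Real.tanh (h * |(j3:ℝ)|) * (g + κ * (j3:ℝ) ^ 2)) = 0} := by
  set B : ℤ := ⌈g/κ⌉ + 1 with hB
  have hfin : Set.Finite ((Set.Icc (-B) B ×ˢ Set.Icc (-B) B ×ˢ Set.Icc (-B) B) ×ˢ
      (Set.Icc (-1:ℤ) 1 ×ˢ Set.Icc (-1:ℤ) 1 ×ˢ Set.Icc (-1:ℤ) 1)) :=
    Set.Finite.prod
      ((Set.finite_Icc _ _).prod ((Set.finite_Icc _ _).prod (Set.finite_Icc _ _)))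
      ((Set.finite_Icc _ _).prod ((Set.finite_Icc _ _).prod (Set.finite_Icc _ _)))
  apply hfin.subset
  rintro ⟨⟨j1, j2, j3⟩, σ1, σ2, σ3⟩ hp
  obtain ⟨h1, h2, h3, hs1, hs2, hs3, hl, hr⟩ := hp
  dsimp only at h1 h2 h3 hs1 hs2 hs3 hl hr
  rw [omrw, omrw, omrw] at hr
  have hbnd : |j1| ≤ B ∧ |j2| ≤ B ∧ |j3| ≤ B := by
    have O1 : 0 < Om g κ h |(j1:ℝ)| := by
      apply Om_pos hg hκ hh
      have : (1:ℤ) ≤ |j1| := by simp only [Int.abs_eq_natAbs]; omega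
      rw [← Int.cast_abs]; exact_mod_cast lt_of_lt_of_le zero_lt_one this
    have O2 : 0 < Om g κ h |(j2:ℝ)| := by
      apply Om_pos hg hκ hh
      have : (1:ℤ) ≤ |j2| := by simp only [Int.abs_eq_natAbs]; omega
      rw [← Int.cast_abs]; exact_mod_cast lt_of_lt_of_le zero_lt_one this
    have O3 : 0 < Om g κ h |(j3:ℝ)| := by
      apply Om_pos hg hκ hh
      have : (1:ℤ) ≤ |j3| := by simp only [Int.abs_eq_natAbs]; omega
      rw [← Int.cast_abs]; exact_mod_cast lt_of_lt_of_le zero_lt_one this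
    rcases hs1 with rfl | rfl <;> rcases hs2 with rfl | rfl <;> rcases hs3 with rfl | rfl <;>
      push_cast at hr <;> norm_num at hl hr
    · exfalso; linarith
    · -- (1,1,-1) : j3 = j1 + j2
      have := core' hg hκ hh j1 j2 j3 h1 h2 h3 (by omega) (by linarith)
      omega
    · -- (1,-1,1) : j2 = j1 + j3
      have := core' hg hκ hh j1 j3 j2 h1 h3 h2 (by omega) (by linarith)
      omega
    · -- (1,-1,-1) : j1 = j2 + j3
      have := core' hg hκ hh j2 j3 j1 h2 h3 h1 (by omega) (by linarith)
      omega
    · -- (-1,1,1) : j1 = j2 + j3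
      have := core' hg hκ hh j2 j3 j1 h2 h3 h1 (by omega) (by linarith)
      omega
    · -- (-1,1,-1) : j2 = j1 + j3
      have := core' hg hκ hh j1 j3 j2 h1 h3 h2 (by omega) (by linarith)
      omega
    · -- (-1,-1,1) : j3 = j1 + j2
      have := core' hg hκ hh j1 j2 j3 h1 h2 h3 (by omega) (by linarith)
      omega
    · exfalso; linarith
  have hσ1 : σ1 = 1 ∨ σ1 = -1 := hs1
  simp only [Set.mem_prod, Set.mem_Icc]
  obtain ⟨b1, b2, b3⟩ := hbnd
  refine ⟨⟨⟨?_, ?_⟩, ⟨?_, ?_⟩, ⟨?_, ?_⟩⟩, ⟨?_, ?_⟩, ⟨?_, ?_⟩, ⟨?_, ?_⟩⟩ <;>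
    simp only [Int.abs_eq_natAbs] at b1 b2 b3 <;> omega
end

section
/- Let $g \geq 0$, $\kappa > 0$, $h > 0$, $\Omega(n) = \sqrt{|n|\tanh(h|n|)(g+\kappa n^2)}$, and let $C > 0$ be a constant such that $|\Omega(n) - \sqrt{\kappa}|n|^{3/2}| \leq C|n|^{-1/2}$ for all $n \neq 0$. If $n_1 = n_2 + n_3$ with integers $n_1 \geq n_2 \geq n_3 \geq 1$ and $n_2 n_3 \geq (30 C)^2/\kappa$, then $|\Omega(n_1) - \Omega(n_2) - \Omega(n_3)| \geq \frac{\sqrt{\kappa}}{10}\sqrt{n_2}$. -/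
set_option maxHeartbeats 2000000

lemma key_ineq (sa sb s : ℝ) (h1 : 1 ≤ sb) (hba : sb ≤ sa)
    (hs : s ^ 2 = sa ^ 2 + sb ^ 2) (hs0 : 0 ≤ s) :
    sa * sb ^ 2 / 2 ≤ s ^ 3 - sa ^ 3 - sb ^ 3 := by
  have hsa0 : (0:ℝ) ≤ sa := by linarith
  have hsa : sa ≤ s := by
    have h' : sa ^ 2 ≤ s ^ 2 := by nlinarith [sq_nonneg sb]
    exact (pow_le_pow_iff_left₀ hsa0 hs0 two_ne_zero).mp h'
  have h2s : 2 * sa * s ≤ 2 * sa ^ 2 + sb ^ 2 := by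
    have hl : (2 * sa * s) ^ 2 = 4 * sa ^ 2 * (sa ^ 2 + sb ^ 2) := by
      rw [← hs]; ring
    have hsq : (2 * sa * s) ^ 2 ≤ (2 * sa ^ 2 + sb ^ 2) ^ 2 := by
      rw [hl]; nlinarith [sq_nonneg (sb ^ 2)]
    exact (pow_le_pow_iff_left₀ (by positivity) (by positivity) two_ne_zero).mp hsq
  have hA : 2 * sa * s + sb ^ 2 ≤ 2 * s ^ 2 := by
    rw [hs]; linarith
  have hB := mul_le_mul_of_nonneg_left hA hs0
  have hssa : sa * s ^ 2 = sa ^ 3 + sa * sb ^ 2 := by rw [hs]; ring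
  have hC : sb * sb ^ 2 ≤ sa * sb ^ 2 := mul_le_mul_of_nonneg_right hba (sq_nonneg sb)
  have hD : sa * sb ^ 2 ≤ s * sb ^ 2 := mul_le_mul_of_nonneg_right hsa (sq_nonneg sb)
  nlinarith [hB, hssa, hC, hD]

theorem stmt_6 (g κ h C : ℝ) (hg : 0 ≤ g) (hκ : 0 < κ) (hh : 0 < h) (hC : 0 < C)
    (Ω : ℤ → ℝ)
    (hΩ : ∀ n : ℤ, Ω n = Real.sqrt (|(n:ℝ)| * Real.tanh (h * |(n:ℝ)|) * (g + κ * (n:ℝ) ^ 2)))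
    (hexp : ∀ n : ℤ, n ≠ 0 → |Ω n - Real.sqrt κ * |(n:ℝ)| ^ ((3:ℝ)/2)| ≤ C * |(n:ℝ)| ^ (-(1:ℝ)/2))
    (n1 n2 n3 : ℤ) (h1 : n1 = n2 + n3) (h12 : n2 ≤ n1) (h32 : n3 ≤ n2) (h3 : 1 ≤ n3)
    (hprod : (30 * C) ^ 2 / κ ≤ (n2:ℝ) * (n3:ℝ)) :
    Real.sqrt κ / 10 * Real.sqrt (n2:ℝ) ≤ |Ω n1 - Ω n2 - Ω n3| := by
  have hb1 : (1:ℝ) ≤ (n3:ℝ) := by exact_mod_cast h3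
  have hab : (n3:ℝ) ≤ (n2:ℝ) := by exact_mod_cast h32
  set a := ((n2:ℤ):ℝ) with ha_def
  set b := ((n3:ℤ):ℝ) with hb_def
  have ha1 : (1:ℝ) ≤ a := le_trans hb1 hab
  have hn1 : ((n1:ℤ):ℝ) = a + b := by rw [h1]; push_cast; ring
  have habs1 : |((n1:ℤ):ℝ)| = a + b := by rw [hn1, abs_of_pos]; linarith
  have habs2 : |a| = a := abs_of_pos (by linarith)
  have habs3 : |b| = b := abs_of_pos (by linarith)
  have r32 : ∀ x : ℝ, 1 ≤ x → x ^ ((3:ℝ)/2) = (Real.sqrt x) ^ 3 := by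
    intro x hx
    rw [Real.sqrt_eq_rpow, ← Real.rpow_natCast (x ^ ((1:ℝ)/2)) 3,
      ← Real.rpow_mul (by linarith)]
    norm_num
  have rneg : ∀ x : ℝ, 1 ≤ x → x ^ (-(1:ℝ)/2) = (Real.sqrt x)⁻¹ := by
    intro x hx
    rw [Real.sqrt_eq_rpow, ← Real.rpow_neg_one (x ^ ((1:ℝ)/2)),
      ← Real.rpow_mul (by linarith)]
    norm_num
  set sa := Real.sqrt a with hsa_def
  set sb := Real.sqrt b with hsb_def
  set s := Real.sqrt (a + b) with hs_def
  have hsa2 : sa ^ 2 = a := Real.sq_sqrt (by linarith)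
  have hsb2 : sb ^ 2 = b := Real.sq_sqrt (by linarith)
  have hs2 : s ^ 2 = a + b := Real.sq_sqrt (by linarith)
  have hsb1 : 1 ≤ sb := by
    rw [show (1:ℝ) = Real.sqrt 1 by simp]
    exact Real.sqrt_le_sqrt hb1
  have hsba : sb ≤ sa := Real.sqrt_le_sqrt hab
  have hs0 : 0 ≤ s := Real.sqrt_nonneg _
  have hsbs : sb ≤ s := Real.sqrt_le_sqrt (by linarith)
  have hkey : sa * sb ^ 2 / 2 ≤ s ^ 3 - sa ^ 3 - sb ^ 3 :=
    key_ineq sa sb s hsb1 hsba (by rw [hs2, hsa2, hsb2]) hs0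
  have hn1ne : n1 ≠ 0 := by omega
  have hn2ne : n2 ≠ 0 := by omega
  have hn3ne : n3 ≠ 0 := by omega
  have he1 := hexp n1 hn1ne
  have he2 := hexp n2 hn2ne
  have he3 := hexp n3 hn3ne
  rw [habs1, r32 _ (by linarith), rneg _ (by linarith)] at he1
  rw [show |((n2:ℤ):ℝ)| = a from habs2, r32 _ ha1, rneg _ ha1] at he2
  rw [show |((n3:ℤ):ℝ)| = b from habs3, r32 _ hb1, rneg _ hb1] at he3
  have hsbpos : (0:ℝ) < sb := by linarith
  have hCsb : C * s⁻¹ ≤ C / sb := by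
    rw [div_eq_mul_inv]
    exact mul_le_mul_of_nonneg_left (inv_anti₀ hsbpos hsbs) hC.le
  have hCsa : C * sa⁻¹ ≤ C / sb := by
    rw [div_eq_mul_inv]
    exact mul_le_mul_of_nonneg_left (inv_anti₀ hsbpos hsba) hC.le
  have hCsb' : C * sb⁻¹ ≤ C / sb := by rw [div_eq_mul_inv]
  have h30 : 30 * C ≤ Real.sqrt κ * (sa * sb) := by
    have h1' : (30 * C) ^ 2 ≤ κ * (a * b) := by
      have := (div_le_iff₀ hκ).mp hprod
      linarith
    have h2' : Real.sqrt ((30 * C) ^ 2) ≤ Real.sqrt (κ * (a * b)) := Real.sqrt_le_sqrt h1'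
    rwa [Real.sqrt_sq (by positivity), Real.sqrt_mul hκ.le,
      Real.sqrt_mul (by linarith : (0:ℝ) ≤ a)] at h2'
  have hsk : 0 ≤ Real.sqrt κ := Real.sqrt_nonneg _
  have hsa0 : (0:ℝ) ≤ sa := by linarith
  have hX : Real.sqrt κ / 10 * sa ≤ Ω n1 - Ω n2 - Ω n3 := by
    have e1 := abs_le.mp (he1.trans hCsb)
    have e2 := abs_le.mp (he2.trans hCsa)
    have e3 := abs_le.mp (he3.trans hCsb')
    have hD : Real.sqrt κ * (sa * sb ^ 2 / 2) ≤ Real.sqrt κ * (s ^ 3 - sa ^ 3 - sb ^ 3) :=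
      mul_le_mul_of_nonneg_left hkey hsk
    have hCbound : 3 * (C / sb) ≤ Real.sqrt κ * sa / 10 := by
      rw [show 3 * (C / sb) = (3 * C) / sb by ring,
        div_le_div_iff₀ hsbpos (by norm_num : (0:ℝ) < 10)]
      linarith [h30]
    have hsbsq1 : 1 ≤ sb ^ 2 := by
      have h11 : (1:ℝ) * 1 ≤ sb * sb := mul_le_mul hsb1 hsb1 zero_le_one (by linarith)
      calc (1:ℝ) = 1 * 1 := by ring
        _ ≤ sb * sb := h11
        _ = sb ^ 2 := by ring
    have hDist : Real.sqrt κ * (s ^ 3 - sa ^ 3 - sb ^ 3)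
        = Real.sqrt κ * s ^ 3 - Real.sqrt κ * sa ^ 3 - Real.sqrt κ * sb ^ 3 := by ring
    have hmid : Real.sqrt κ * (sa * sb ^ 2 / 2) - 3 * (C / sb) ≤ Ω n1 - Ω n2 - Ω n3 := by
      linarith [hD, e1.1, e2.2, e3.2]
    have hsb2'' : Real.sqrt κ * sa * 1 ≤ Real.sqrt κ * sa * sb ^ 2 :=
      mul_le_mul_of_nonneg_left hsbsq1 (mul_nonneg hsk hsa0)
    linarith [hmid, hCbound, hsb2'']
  calc Real.sqrt κ / 10 * Real.sqrt ((n2:ℤ):ℝ) = Real.sqrt κ / 10 * sa := rfl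
    _ ≤ Ω n1 - Ω n2 - Ω n3 := hX
    _ ≤ |Ω n1 - Ω n2 - Ω n3| := le_abs_self _
end

section
/- Let $h_0, \kappa_0$ be such that the constant $C(g,\kappa,h) \leq c(\sqrt{\kappa}\,h^{-2} + g\kappa^{-1/2})$ in the expansion $|\Omega(n) - \sqrt{\kappa}|n|^{3/2}| \leq C|n|^{-1/2}$ satisfies $(30C)^2/\kappa \leq 1$. Then for all integers $n_1 = n_2 + n_3$ with $n_1 \geq n_2 \geq n_3 \geq 1$, one has $|\Omega(n_1) - \Omega(n_2) - \Omega(n_3)| \geq \frac{\sqrt{\kappa}}{10}\sqrt{n_2} > 0$; in particular the system $\sigma_1\Omega(j_1)+\sigma_2\Omega(j_2)+\sigma_3\Omega(j_3)=0$, $\sigma_1 j_1+\sigma_2 j_2+\sigma_3 j_3=0$ has no solutions with $j_i \in \mathbb{Z}\setminus\{0\}$, $\sigma_i \in \{\pm 1\}$. -/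
theorem stmt_14 (g κ h C : ℝ) (hg : 0 ≤ g) (hκ : 0 < κ) (hh : 0 < h) (hC : 0 < C)
    (Ω : ℤ → ℝ)
    (hΩ : ∀ n : ℤ, Ω n = Real.sqrt (|(n:ℝ)| * Real.tanh (h * |(n:ℝ)|) * (g + κ * (n:ℝ) ^ 2)))
    (hexp : ∀ n : ℤ, n ≠ 0 → |Ω n - Real.sqrt κ * |(n:ℝ)| ^ ((3:ℝ)/2)| ≤ C * |(n:ℝ)| ^ (-(1:ℝ)/2))
    (hsmall : (30 * C) ^ 2 / κ ≤ 1) :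
    (∀ n1 n2 n3 : ℤ, n1 = n2 + n3 → n2 ≤ n1 → n3 ≤ n2 → 1 ≤ n3 →
        Real.sqrt κ / 10 * Real.sqrt (n2:ℝ) ≤ |Ω n1 - Ω n2 - Ω n3|
        ∧ 0 < Real.sqrt κ / 10 * Real.sqrt (n2:ℝ))
    ∧ ∀ (j1 j2 j3 σ1 σ2 σ3 : ℤ),
        j1 ≠ 0 → j2 ≠ 0 → j3 ≠ 0 →
        (σ1 = 1 ∨ σ1 = -1) → (σ2 = 1 ∨ σ2 = -1) → (σ3 = 1 ∨ σ3 = -1) →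
        σ1 * j1 + σ2 * j2 + σ3 * j3 = 0 →
        (σ1:ℝ) * Ω j1 + (σ2:ℝ) * Ω j2 + (σ3:ℝ) * Ω j3 ≠ 0 := by
  have hsk : 0 < Real.sqrt κ := Real.sqrt_pos.mpr hκ
  -- 30 C ≤ √κ
  have h30 : 30 * C ≤ Real.sqrt κ := by
    rw [show (30:ℝ) * C = 30 * C by rfl]
    have h1 : (30 * C) ^ 2 ≤ κ := by
      have := (div_le_one hκ).mp hsmall
      linarith
    exact (Real.le_sqrt (by positivity) hκ.le).mpr h1
  -- basic bound : for n ≥ 1 integer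
  have bound : ∀ n : ℤ, 1 ≤ n →
      |Ω n - Real.sqrt κ * Real.sqrt ((n:ℝ)^3)| ≤ C := by
    intro n hn
    have hn0 : n ≠ 0 := by omega
    have hn1 : (1:ℝ) ≤ (n:ℝ) := by exact_mod_cast hn
    have habs : |(n:ℝ)| = (n:ℝ) := abs_of_pos (by linarith)
    have h32 : ((n:ℝ)) ^ ((3:ℝ)/2) = Real.sqrt ((n:ℝ)^3) := by
      rw [Real.sqrt_eq_rpow, ← Real.rpow_natCast (n:ℝ) 3, ← Real.rpow_mul (by linarith)]
      norm_num
    have hneg : ((n:ℝ)) ^ (-(1:ℝ)/2) ≤ 1 := by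
      apply Real.rpow_le_one_of_one_le_of_nonpos hn1
      norm_num
    have := hexp n hn0
    rw [habs, h32] at this
    have h2 : C * (n:ℝ) ^ (-(1:ℝ)/2) ≤ C * 1 := by
      apply mul_le_mul_of_nonneg_left hneg hC.le
    calc |Ω n - Real.sqrt κ * Real.sqrt ((n:ℝ)^3)| ≤ C * (n:ℝ) ^ (-(1:ℝ)/2) := this
      _ ≤ C := by linarith
  have lb : ∀ n : ℤ, 1 ≤ n → Real.sqrt κ * Real.sqrt ((n:ℝ)^3) - C ≤ Ω n := by
    intro n hn
    have := abs_le.mp (bound n hn)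
    linarith [this.1]
  have ub : ∀ n : ℤ, 1 ≤ n → Ω n ≤ Real.sqrt κ * Real.sqrt ((n:ℝ)^3) + C := by
    intro n hn
    have := abs_le.mp (bound n hn)
    linarith [this.2]
  have sq1 : ∀ n : ℤ, 1 ≤ n → (1:ℝ) ≤ Real.sqrt ((n:ℝ)^3) := by
    intro n hn
    have hn1 : (1:ℝ) ≤ (n:ℝ) := by exact_mod_cast hn
    rw [show (1:ℝ) = Real.sqrt 1 from (Real.sqrt_one).symm]
    refine Real.sqrt_le_sqrt ?_
    calc (1:ℝ) = 1^3 := by norm_num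
      _ ≤ (n:ℝ)^3 := pow_le_pow_left₀ (by norm_num) hn1 3
  -- superadditivity : for 1 ≤ b ≤ a
  have super : ∀ a b : ℝ, 1 ≤ b → b ≤ a →
      Real.sqrt (a^3) + (1/2) * b * Real.sqrt a ≤ Real.sqrt ((a+b)^3) - Real.sqrt (b^3) := by
    intro a b hb hba
    have ha : (1:ℝ) ≤ a := le_trans hb hba
    have ha0 : (0:ℝ) ≤ a := by linarith
    have hsa : Real.sqrt a ^ 2 = a := Real.sq_sqrt ha0
    have hsa3 : Real.sqrt (a^3) = a * Real.sqrt a := by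
      rw [show a^3 = a^2 * a by ring, Real.sqrt_mul (by positivity), Real.sqrt_sq ha0]
    have hsb3 : Real.sqrt (b^3) = b * Real.sqrt b := by
      rw [show b^3 = b^2 * b by ring, Real.sqrt_mul (by positivity), Real.sqrt_sq (by linarith)]
    have hbb : Real.sqrt b ≤ Real.sqrt a := Real.sqrt_le_sqrt hba
    have hsbn : 0 ≤ Real.sqrt b := Real.sqrt_nonneg b
    have key : a * Real.sqrt a + (3/2) * b * Real.sqrt a ≤ Real.sqrt ((a+b)^3) := by
      have hx : (0:ℝ) ≤ a * Real.sqrt a + (3/2) * b * Real.sqrt a := by positivity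
      rw [Real.le_sqrt hx (by positivity)]
      have hsan : 0 ≤ Real.sqrt a := Real.sqrt_nonneg a
      have hb0 : (0:ℝ) ≤ b := by linarith
      nlinarith [hsa, mul_nonneg (mul_nonneg ha0 hb0) hb0, mul_nonneg (mul_nonneg hb0 hb0) hb0]
    have hb3 : Real.sqrt (b^3) ≤ b * Real.sqrt a := by
      rw [hsb3]; exact mul_le_mul_of_nonneg_left hbb (by linarith)
    rw [hsa3]
    linarith
  -- the main quantitative estimate
  have P1 : ∀ n1 n2 n3 : ℤ, n1 = n2 + n3 → n3 ≤ n2 → 1 ≤ n3 →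
      Real.sqrt κ / 10 * Real.sqrt (n2:ℝ) ≤ Ω n1 - Ω n2 - Ω n3 := by
    intro n1 n2 n3 he h32 h31
    have h21 : 1 ≤ n2 := le_trans h31 h32
    have h11 : 1 ≤ n1 := by omega
    have hb : (1:ℝ) ≤ (n3:ℝ) := by exact_mod_cast h31
    have hba : (n3:ℝ) ≤ (n2:ℝ) := by exact_mod_cast h32
    have hcast : ((n1:ℤ):ℝ) = (n2:ℝ) + (n3:ℝ) := by exact_mod_cast he
    have hs := super (n2:ℝ) (n3:ℝ) hb hba
    have l1 := lb n1 h11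
    have u2 := ub n2 h21
    have u3 := ub n3 h31
    rw [hcast] at l1
    have hsa1 : (1:ℝ) ≤ Real.sqrt (n2:ℝ) := by
      rw [show (1:ℝ) = Real.sqrt 1 from (Real.sqrt_one).symm]
      exact Real.sqrt_le_sqrt (by linarith)
    -- Ω n1 - Ω n2 - Ω n3 ≥ √κ (√((a+b)^3) - √(a^3) - √(b^3)) - 3C ≥ √κ (1/2 b √a) - 3C
    have step : Real.sqrt κ * ((1/2) * (n3:ℝ) * Real.sqrt (n2:ℝ)) - 3 * C ≤ Ω n1 - Ω n2 - Ω n3 := by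
      nlinarith [hsk.le, hs]
    have final : Real.sqrt κ / 10 * Real.sqrt (n2:ℝ) ≤
        Real.sqrt κ * ((1/2) * (n3:ℝ) * Real.sqrt (n2:ℝ)) - 3 * C := by
      nlinarith [hsk.le, mul_le_mul_of_nonneg_left hsa1 hsk.le,
        mul_nonneg hsk.le (Real.sqrt_nonneg (n2:ℝ))]
    linarith
  -- evenness
  have even : ∀ n : ℤ, Ω (-n) = Ω n := by
    intro n
    rw [hΩ, hΩ]
    push_cast
    rw [abs_neg]
    ring_nf
  -- positivity
  have Hpos : ∀ n : ℤ, n ≠ 0 → 0 < Ω n := by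
    intro n hn
    have key : ∀ m : ℤ, 1 ≤ m → 0 < Ω m := by
      intro m hm
      have := lb m hm
      have := sq1 m hm
      nlinarith [hsk]
    rcases lt_or_gt_of_ne hn with hneg | hpos
    · have : 1 ≤ -n := by omega
      have := key (-n) this
      rwa [even n] at this
    · exact key n hpos
  -- no Ω A = Ω B + Ω C' with 1 ≤ A ≤ B, 1 ≤ C'
  have H : ∀ A B D : ℤ, 1 ≤ A → 1 ≤ B → 1 ≤ D → A ≤ B → Ω A ≠ Ω B + Ω D := by
    intro A B D hA hB hD hAB heq
    have hAB' : Real.sqrt ((A:ℝ)^3) ≤ Real.sqrt ((B:ℝ)^3) := by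
      apply Real.sqrt_le_sqrt
      have hAB2 : (A:ℝ) ≤ (B:ℝ) := by exact_mod_cast hAB
      have hA1 : (1:ℝ) ≤ (A:ℝ) := by exact_mod_cast hA
      exact pow_le_pow_left₀ (by linarith) hAB2 3
    have uA := ub A hA
    have lB := lb B hB
    have lD := lb D hD
    have hD1 := sq1 D hD
    -- √κ √B³ + √κ - 2C ≤ Ω B + Ω D = Ω A ≤ √κ √A³ + C ≤ √κ √B³ + C
    nlinarith [hsk, mul_le_mul_of_nonneg_left hD1 hsk.le, mul_le_mul_of_nonneg_left hAB' hsk.le]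
  -- main' : p ≥ 1
  have main' : ∀ p q r : ℤ, 1 ≤ p → q ≠ 0 → r ≠ 0 → p = q + r → Ω p ≠ Ω q + Ω r := by
    intro p q r hp hq hr he heq
    rcases lt_or_gt_of_ne hq with hqn | hqp
    · rcases lt_or_gt_of_ne hr with hrn | hrp
      · omega
      · -- q ≤ -1, r ≥ 1 : p ≤ r - 1 < r, Ω q = Ω (-q)
        have h1 : 1 ≤ -q := by omega
        have h2 : p ≤ r := by omega
        apply H p r (-q) hp (by omega) h1 h2
        rw [heq, even]; ring
    · rcases lt_or_gt_of_ne hr with hrn | hrp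
      · -- r ≤ -1, q ≥ 1 : p ≤ q
        have h1 : 1 ≤ -r := by omega
        have h2 : p ≤ q := by omega
        apply H p q (-r) hp (by omega) h1 h2
        rw [heq, even]
      · -- both positive : use P1
        rcases le_total r q with hle | hle
        · have := P1 p q r he hle (by omega)
          have hq1 : (1:ℝ) ≤ Real.sqrt (q:ℝ) := by
            rw [show (1:ℝ) = Real.sqrt 1 from (Real.sqrt_one).symm]
            exact Real.sqrt_le_sqrt (by exact_mod_cast hqp)
          nlinarith [hsk]
        · have := P1 p r q (by omega) hle (by omega)
          have hq1 : (1:ℝ) ≤ Real.sqrt (r:ℝ) := by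
            rw [show (1:ℝ) = Real.sqrt 1 from (Real.sqrt_one).symm]
            exact Real.sqrt_le_sqrt (by exact_mod_cast hrp)
          nlinarith [hsk]
  have main : ∀ p q r : ℤ, p ≠ 0 → q ≠ 0 → r ≠ 0 → p = q + r → Ω p ≠ Ω q + Ω r := by
    intro p q r hp hq hr he heq
    rcases lt_or_gt_of_ne hp with hpn | hpp
    · apply main' (-p) (-q) (-r) (by omega) (by omega) (by omega) (by omega)
      rw [even, even, even, heq]
    · exact main' p q r hpp hq hr he heq
  constructor
  · intro n1 n2 n3 h1 h2 h3 h4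
    have hP := P1 n1 n2 n3 h1 h3 h4
    have hq1 : (1:ℝ) ≤ Real.sqrt (n2:ℝ) := by
      rw [show (1:ℝ) = Real.sqrt 1 from (Real.sqrt_one).symm]
      have : (1:ℝ) ≤ (n2:ℝ) := by exact_mod_cast le_trans h4 h3
      exact Real.sqrt_le_sqrt this
    constructor
    · exact le_trans hP (le_abs_self _)
    · nlinarith [hsk]
  · intro j1 j2 j3 σ1 σ2 σ3 hj1 hj2 hj3 hσ1 hσ2 hσ3 hsum heq
    have p1 := Hpos j1 hj1
    have p2 := Hpos j2 hj2
    have p3 := Hpos j3 hj3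
    rcases hσ1 with rfl | rfl <;> rcases hσ2 with rfl | rfl <;> rcases hσ3 with rfl | rfl <;>
      push_cast at heq <;> simp only [one_mul, neg_mul, neg_one_mul] at heq hsum
    · linarith
    · exact main j3 j1 j2 hj3 hj1 hj2 (by omega) (by linarith)
    · exact main j2 j1 j3 hj2 hj1 hj3 (by omega) (by linarith)
    · exact main j1 j2 j3 hj1 hj2 hj3 (by omega) (by linarith)
    · exact main j1 j2 j3 hj1 hj2 hj3 (by omega) (by linarith)
    · exact main j2 j1 j3 hj2 hj1 hj3 (by omega) (by linarith)
    · exact main j3 j1 j2 hj3 hj1 hj2 (by omega) (by linarith)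
    · linarith
end
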